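/- arXiv:1611.05555 — 7 statements merged into one kernel-verified Lean document; each statement's English description precedes it below -/
import Mathlib

section
/- In a shelf with a two-sided identity element, a*b = b*(a*b) for all a, b. -/
theorem op_eq_op_op_of_left_identity {X : Type*} (op : X → X → X)
    (sd : ∀ a b c : X, op (op a b) c = op (op a c) (op b c))
    (e : X) (he : ∀ a : X, op e a = a) (a b : X) :
    op a b = op b (op a b) := by
  simpa only [he] using sd e a b

/-- In a shelf with a two-sided identity element, a*b = b*(a*b). -/
theorem unital_shelf_absorb_left {X : Type*} (op : X → X → X)
    (sd : ∀ a b c : X, op (op a b) c = op (op a c) (op b c))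
    (e : X) (he : ∀ a : X, op e a = a ∧ op a e = a) :
    ∀ a b : X, op a b = op b (op a b) :=
  op_eq_op_op_of_left_identity op sd e fun a => (he a).1
end

section
/- Every proto unital shelf is associative: if a shelf satisfies a*b = b*(a*b) and a*b = (a*b)*b for all a,b, then (a*b)*c = a*(b*c) for all a,b,c. -/
/-- Every proto unital shelf is associative. -/
theorem proto_unital_shelf_assoc {X : Type*} (op : X → X → X)
    (sd : ∀ a b c : X, op (op a b) c = op (op a c) (op b c))
    (h1 : ∀ a b : X, op a b = op b (op a b))
    (h2 : ∀ a b : X, op a b = op (op a b) b) :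
    ∀ a b c : X, op (op a b) c = op a (op b c) := by
  intro a b c
  calc op (op a b) c
      = op (op a c) (op b c) := sd a b c
    _ = op (op a (op b c)) (op c (op b c)) := sd a c (op b c)
    _ = op (op a (op b c)) (op b c) := by rw [← h1 b c]
    _ = op a (op b c) := (h2 a (op b c)).symm
end

section
/- In any associative shelf, a*b*b*c = a*b*c for all a,b,c (where products associate, e.g. a*b*b*c = ((a*b)*b)*c). -/
theorem assoc_shelf_abcb {X : Type*} (op : X → X → X)
    (assoc : ∀ a b c : X, op (op a b) c = op a (op b c))
    (sd : ∀ a b c : X, op (op a b) c = op (op a c) (op b c)) (a b c : X) :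
    op (op (op a b) c) b = op (op a c) b := by
  rw [assoc, ← sd]

/-- In any associative shelf, a*b*b*c = a*b*c. -/
theorem assoc_shelf_abbc {X : Type*} (op : X → X → X)
    (assoc : ∀ a b c : X, op (op a b) c = op a (op b c))
    (sd : ∀ a b c : X, op (op a b) c = op (op a c) (op b c)) :
    ∀ a b c : X, op (op (op a b) b) c = op (op a b) c := by
  intro a b c
  calc op (op (op a b) b) c
      = op (op (op a b) c) (op b c) := sd _ b c
    _ = op (op (op (op a b) c) b) c := (assoc _ b c).symm
    _ = op (op (op a c) b) c := by rw [assoc_shelf_abcb op assoc sd a b c]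
    _ = op (op a c) (op b c) := assoc _ b c
    _ = op (op a b) c := (sd a b c).symm
end

section
/- In a proto unital shelf, a*b = b*a if and only if a*b*a = b*a*b (products associate to the left), for all a,b. -/
/-!
Self-distributivity together with the two absorption laws makes the operation associative, and
then `(a * b) * a = a * (b * a) = b * a`. Hence the braid relation `a * b * a = b * a * b`
reads `b * a = a * b`.
-/

section ProtoUnital

variable {X : Type*} (op : X → X → X)

theorem assoc_of_rightSelfDistrib_of_absorb
    (sd : ∀ a b c : X, op (op a b) c = op (op a c) (op b c))
    (h1 : ∀ a b : X, op a b = op b (op a b))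
    (h2 : ∀ a b : X, op a b = op (op a b) b) (a b c : X) :
    op (op a b) c = op a (op b c) :=
  calc op (op a b) c = op (op a c) (op b c) := sd a b c
    _ = op (op a (op b c)) (op c (op b c)) := sd a c (op b c)
    _ = op (op a (op b c)) (op b c) := by rw [← h1 b c]
    _ = op a (op b c) := (h2 a (op b c)).symm

theorem op_op_self_of_assoc
    (assoc : ∀ a b c : X, op (op a b) c = op a (op b c))
    (h1 : ∀ a b : X, op a b = op b (op a b)) (a b : X) :
    op (op a b) a = op b a := by
  rw [assoc, ← h1 b a]

end ProtoUnital

/-- In a proto unital shelf, a*b = b*a iff a*b*a = b*a*b. -/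
theorem proto_unital_comm_iff_braid {X : Type*} (op : X → X → X)
    (sd : ∀ a b c : X, op (op a b) c = op (op a c) (op b c))
    (h1 : ∀ a b : X, op a b = op b (op a b))
    (h2 : ∀ a b : X, op a b = op (op a b) b) :
    ∀ a b : X, op a b = op b a ↔ op (op a b) a = op (op b a) b := by
  have assoc := assoc_of_rightSelfDistrib_of_absorb op sd h1 h2
  intro a b
  rw [op_op_self_of_assoc op assoc h1 a b, op_op_self_of_assoc op assoc h1 b a]
  exact eq_comm
end

section
/- Let (X,*) be a proto unital shelf or idempotent semigroup, and define two relations on X: a ~ b iff there exist x,y with a = x*y*x and b = y*x*y; and a ≈ b iff there exist x,y with a = x*y and b = y*x. Then the equivalence relations generated by ~ and by ≈ coincide. -/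
/-!
In a proto unital shelf `x * y * x = y * x`, so `x * y * x ~ y * x * y` is literally the
relation `y * x ≈ x * y`. In an idempotent semigroup each generator of one relation is a
short chain of generators of the other: `x * y * x ≈ x * (x * y) = x * y ≈ y * x = y * (y * x) ≈
y * x * y`, and `x * y = (x * y) * x * (x * y) ~ x * (x * y) * x = x * y * x ~ y * x * y ~ y * x`.
-/

namespace Relation

theorem eqvGen_eq_of_le_eqvGen {α : Type*} {r s : α → α → Prop}
    (hrs : r ≤ EqvGen s) (hsr : s ≤ EqvGen r) : EqvGen r = EqvGen s :=
  le_antisymm ((EqvGen.mono hrs).trans (EqvGen.is_equivalence s).eqvGen_eq.le)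
    ((EqvGen.mono hsr).trans (EqvGen.is_equivalence r).eqvGen_eq.le)

end Relation

section Relations

variable (M : Type*) [Mul M]

def swapRel (a b : M) : Prop := ∃ x y : M, a = x * y ∧ b = y * x

def sandwichRel (a b : M) : Prop := ∃ x y : M, a = x * y * x ∧ b = y * x * y

variable {M}

theorem swapRel.symm {a b : M} (h : swapRel M a b) : swapRel M b a :=
  let ⟨x, y, ha, hb⟩ := h
  ⟨y, x, hb, ha⟩

end Relations

section ProtoUnitalShelf

variable {M : Type*} [Mul M]
  (mul_right_distrib : ∀ a b c : M, a * b * c = a * c * (b * c))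
  (mul_eq_mul_mul_left : ∀ a b : M, a * b = b * (a * b))
  (mul_eq_mul_mul_right : ∀ a b : M, a * b = a * b * b)
include mul_eq_mul_mul_left mul_eq_mul_mul_right

theorem isIdempotentElem_mul_of_protoUnital (u v : M) : IsIdempotentElem (u * v) :=
  calc u * v * (u * v) = v * (u * v) * (u * v) := by rw [← mul_eq_mul_mul_left]
    _ = u * v := by rw [← mul_eq_mul_mul_right, ← mul_eq_mul_mul_left]

include mul_right_distrib

theorem mul_mul_self_of_protoUnitalShelf (a b : M) : a * b * a = b * a :=
  calc a * b * a = a * a * (b * a) := mul_right_distrib a b a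
    _ = a * (b * a) * (a * (b * a)) := mul_right_distrib a a (b * a)
    _ = b * a * (b * a) := by rw [← mul_eq_mul_mul_left]
    _ = b * a := isIdempotentElem_mul_of_protoUnital mul_eq_mul_mul_left mul_eq_mul_mul_right b a

theorem sandwichRel_eq_swapRel_of_protoUnitalShelf : sandwichRel M = swapRel M := by
  have hmul := mul_mul_self_of_protoUnitalShelf mul_right_distrib mul_eq_mul_mul_left
    mul_eq_mul_mul_right
  ext a b
  simp only [sandwichRel, swapRel, hmul]
  exact ⟨fun ⟨x, y, ha, hb⟩ => ⟨y, x, ha, hb⟩, fun ⟨x, y, ha, hb⟩ => ⟨y, x, ha, hb⟩⟩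

end ProtoUnitalShelf

section Band

variable {M : Type*} [Semigroup M] (idem : ∀ a : M, IsIdempotentElem a)
include idem

theorem mul_mul_self_left_of_band (x y : M) : x * (x * y) = x * y := by
  rw [← mul_assoc, (idem x).eq]

theorem sandwichRel_le_eqvGen_swapRel : sandwichRel M ≤ Relation.EqvGen (swapRel M) := by
  rintro a b ⟨x, y, rfl, rfl⟩
  have left : swapRel M (x * y * x) (x * y) :=
    ⟨x * y, x, rfl, (mul_mul_self_left_of_band idem x y).symm⟩
  have right : swapRel M (y * x * y) (y * x) :=
    ⟨y * x, y, rfl, (mul_mul_self_left_of_band idem y x).symm⟩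
  exact (Relation.EqvGen.rel _ _ left).trans _ _ _
    ((Relation.EqvGen.rel _ _ ⟨x, y, rfl, rfl⟩).trans _ _ _ (Relation.EqvGen.rel _ _ right.symm))

theorem sandwichRel_mul_mul_mul_of_band (x y : M) : sandwichRel M (x * y) (x * y * x) :=
  ⟨x * y, x, by rw [mul_assoc (x * y), mul_mul_self_left_of_band idem, (idem _).eq],
    by rw [mul_mul_self_left_of_band idem]⟩

theorem swapRel_le_eqvGen_sandwichRel : swapRel M ≤ Relation.EqvGen (sandwichRel M) := by
  rintro a b ⟨x, y, rfl, rfl⟩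
  exact (Relation.EqvGen.rel _ _ (sandwichRel_mul_mul_mul_of_band idem x y)).trans _ _ _
    ((Relation.EqvGen.rel _ _ ⟨x, y, rfl, rfl⟩).trans _ _ _
      (Relation.EqvGen.rel _ _ (sandwichRel_mul_mul_mul_of_band idem y x)).symm)

theorem eqvGen_sandwichRel_eq_eqvGen_swapRel_of_band :
    Relation.EqvGen (sandwichRel M) = Relation.EqvGen (swapRel M) :=
  Relation.eqvGen_eq_of_le_eqvGen (sandwichRel_le_eqvGen_swapRel idem)
    (swapRel_le_eqvGen_sandwichRel idem)

end Band

/-- For a proto unital shelf or an idempotent semigroup, the equivalence relation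
generated by `a ~ b ↔ ∃ x y, a = x*y*x ∧ b = y*x*y` coincides with the one generated
by `a ≈ b ↔ ∃ x y, a = x*y ∧ b = y*x`. -/
theorem lbo_relations_coincide {X : Type*} (op : X → X → X)
    (h : ((∀ a b c : X, op (op a b) c = op (op a c) (op b c)) ∧
          (∀ a b : X, op a b = op b (op a b)) ∧
          (∀ a b : X, op a b = op (op a b) b)) ∨
         ((∀ a b c : X, op (op a b) c = op a (op b c)) ∧
          (∀ a : X, op a a = a))) :
    Relation.EqvGen (fun a b => ∃ x y : X, a = op (op x y) x ∧ b = op (op y x) y) =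
      Relation.EqvGen (fun a b => ∃ x y : X, a = op x y ∧ b = op y x) := by
  rcases h with ⟨distrib, left, right⟩ | ⟨assoc, idem⟩
  · let : Mul X := ⟨op⟩
    exact congrArg Relation.EqvGen (sandwichRel_eq_swapRel_of_protoUnitalShelf distrib left right)
  · let : Semigroup X := { mul := op, mul_assoc := assoc }
    exact eqvGen_sandwichRel_eq_eqvGen_swapRel_of_band idem
end

section
/- If (X,*) is a finite commutative semigroup satisfying a*b*b*c = a*b*c, then the map ∂_1: Z[X^2] → Z[X], ∂_1(x_0,x_1) = x_0*x_1*x_0 − x_1*x_0*x_1, is the zero map, and hence the zeroth lbo homology group H_0(X) = Z[X]/im(∂_1) is free abelian of rank |X|. -/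
/-- The first lbo boundary map `∂_1 : ℤ[X²] → ℤ[X]`,
`∂_1(x₀,x₁) = x₀*x₁*x₀ − x₁*x₀*x₁`, extended linearly. -/
noncomputable def lboBoundaryOne {X : Type*} (op : X → X → X) :
    ((X × X) →₀ ℤ) →ₗ[ℤ] (X →₀ ℤ) :=
  Finsupp.lift _ ℤ _ (fun p =>
    Finsupp.single (op (op p.1 p.2) p.1) (1 : ℤ) -
      Finsupp.single (op (op p.2 p.1) p.2) (1 : ℤ))

theorem op_op_self_eq_op_op_self {X : Type*} (op : X → X → X) [Std.Associative op]
    [Std.Commutative op] (habbc : ∀ a b c : X, op (op (op a b) b) c = op (op a b) c)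
    (a b : X) : op (op a b) a = op (op b a) b :=
  calc op (op a b) a = op (op (op a b) b) a := (habbc a b a).symm
    _ = op (op (op b a) a) b := by ac_rfl
    _ = op (op b a) b := habbc b a b

theorem lboBoundaryOne_eq_zero {X : Type*} (op : X → X → X)
    (h : ∀ a b : X, op (op a b) a = op (op b a) b) : lboBoundaryOne op = 0 := by
  refine Finsupp.lhom_ext fun p n => ?_
  simp [lboBoundaryOne, h p.1 p.2]

/-- For a finite commutative semigroup satisfying `a*b*b*c = a*b*c`, the first lbo
boundary map is zero, so `H₀(X) = ℤ[X]/im(∂_1)` is free abelian of rank `|X|`. -/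
theorem comm_semigroup_H0 {X : Type*} [Fintype X] (op : X → X → X)
    (assoc : ∀ a b c : X, op (op a b) c = op a (op b c))
    (comm : ∀ a b : X, op a b = op b a)
    (habbc : ∀ a b c : X, op (op (op a b) b) c = op (op a b) c) :
    lboBoundaryOne op = 0 ∧
    Nonempty (((X →₀ ℤ) ⧸ LinearMap.range (lboBoundaryOne op)) ≃ₗ[ℤ]
      (Fin (Fintype.card X) → ℤ)) := by
  have : Std.Associative op := ⟨assoc⟩
  have : Std.Commutative op := ⟨comm⟩
  have hzero := lboBoundaryOne_eq_zero op (op_op_self_eq_op_op_self op habbc)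
  have hrange : LinearMap.range (lboBoundaryOne op) = ⊥ := by
    rw [hzero, LinearMap.range_zero]
  exact ⟨hzero, ⟨(Submodule.quotEquivOfEqBot _ hrange).trans <|
    (Finsupp.linearEquivFunOnFinite ℤ ℤ X).trans <|
      LinearEquiv.funCongrLeft ℤ ℤ (Fintype.equivFin X).symm⟩⟩
end

section
/- The set of elements of the Jones monoid J_n admitting a fixed partition P = a_1 + ... + a_k of n with all parts a_i ≤ 3 is closed under composition and consists entirely of idempotent elements; in particular it forms an idempotent submonoid of J_n. -/
/-!
The generators `h_i` that cross no dividing line fall into the blocks of the partition. Two of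
them in different blocks are at distance at least two and commute, while a block of at most three
strands carries at most two generators, `h_i` and `h_{i+1}`. So a word in these generators is a
product of commuting block words, and `h_i h_j h_i = h_i` collapses each block word to `h_i` or
`h_i h_j`. These are idempotent, and a product of commuting idempotents is idempotent.
-/

/-- The defining relations of the Jones monoid `J_{m+1}` on generators
`h_0, …, h_{m-1}` (the `m` hook generators): `h_i h_i = h_i`,
`h_i h_j h_i = h_i` for `|i - j| = 1`, and `h_i h_j = h_j h_i` for `|i - j| ≥ 2`. -/
def jonesRel (m : ℕ) : FreeMonoid (Fin m) → FreeMonoid (Fin m) → Prop := fun u v =>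
  (∃ i : Fin m, u = FreeMonoid.of i * FreeMonoid.of i ∧ v = FreeMonoid.of i) ∨
  (∃ i j : Fin m, ((i : ℕ) + 1 = j ∨ (j : ℕ) + 1 = i) ∧
    u = FreeMonoid.of i * FreeMonoid.of j * FreeMonoid.of i ∧ v = FreeMonoid.of i) ∨
  (∃ i j : Fin m, ((i : ℕ) + 2 ≤ j ∨ (j : ℕ) + 2 ≤ i) ∧
    u = FreeMonoid.of i * FreeMonoid.of j ∧ v = FreeMonoid.of j * FreeMonoid.of i)

/-- The Jones monoid `J_n` presented with `n - 1` hook generators. -/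
abbrev JonesMonoid (n : ℕ) := (conGen (jonesRel (n - 1))).Quotient

/-- The image of the `i`-th hook generator `h_{i+1}` (acting on strands `i+1, i+2`)
in the Jones monoid. -/
def jonesGen (n : ℕ) (i : Fin (n - 1)) : JonesMonoid n :=
  (conGen (jonesRel (n - 1))).mk' (FreeMonoid.of i)

section BlockIdempotent

variable {M I B : Type*} [Monoid M] {g : I → M} {β : I → B}

theorem List.prod_map_eq_prod_map_filter_mul_of_commute [DecidableEq B]
    (hcomm : ∀ i j, β i ≠ β j → Commute (g i) (g j)) (b : B) (l : List I) :
    (l.map g).prod =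
      ((l.filter (β · = b)).map g).prod * ((l.filter (β · ≠ b)).map g).prod := by
  induction l with
  | nil => simp
  | cons i t ih =>
    by_cases hi : β i = b
    · simp [hi, ih, mul_assoc]
    · have hcomm_block : Commute (g i) ((t.filter (β · = b)).map g).prod :=
        Commute.list_prod_right _ _ fun x hx => by
          obtain ⟨j, hj, rfl⟩ := List.mem_map.mp hx
          exact hcomm i j (by simp_all)
      simp [hi, ih, ← mul_assoc, hcomm_block.eq]

theorem exists_mul_prod_map_eq_mul_of_forall_mem_block
    (hidem : ∀ i, IsIdempotentElem (g i))
    (habsorb : ∀ i j, β i = β j → g i * g j * g i = g i)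
    (htwo : ∀ i j l, β i = β j → β j = β l → i = j ∨ j = l ∨ i = l)
    (i : I) (t : List I) (ht : ∀ j ∈ t, β j = β i) :
    ∃ j, β j = β i ∧ g i * (t.map g).prod = g i * g j := by
  induction t using List.reverseRecOn with
  | nil => exact ⟨i, rfl, by simp [(hidem i).eq]⟩
  | append_singleton t l ih =>
    obtain ⟨j, hj, hprod⟩ := ih fun j hj => ht j (by simp [hj])
    have hl : β l = β i := ht l (by simp)
    simp only [List.map_append, List.prod_append, List.map_singleton, List.prod_singleton,
      ← mul_assoc, hprod]
    rcases htwo i j l hj.symm (hj.trans hl.symm) with rfl | rfl | rfl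
    · exact ⟨l, hl, by rw [(hidem i).eq]⟩
    · exact ⟨j, hj, by rw [mul_assoc, (hidem j).eq]⟩
    · exact ⟨i, rfl, by rw [habsorb i j hj.symm, (hidem i).eq]⟩

theorem isIdempotentElem_prod_map
    (hidem : ∀ i, IsIdempotentElem (g i))
    (hcomm : ∀ i j, β i ≠ β j → Commute (g i) (g j))
    (habsorb : ∀ i j, β i = β j → g i * g j * g i = g i)
    (htwo : ∀ i j l, β i = β j → β j = β l → i = j ∨ j = l ∨ i = l) :
    ∀ l : List I, IsIdempotentElem (l.map g).prod
  | [] => by simp [IsIdempotentElem]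
  | i :: t => by
    classical
    -- `g i` times the rest of its block collapses to `g i * g j`; the other blocks commute past it.
    obtain ⟨j, hj, hblock⟩ := exists_mul_prod_map_eq_mul_of_forall_mem_block hidem habsorb htwo
      i (t.filter (β · = β i)) (by simp)
    have hrest := isIdempotentElem_prod_map hidem hcomm habsorb htwo (t.filter (β · ≠ β i))
    have hcomm_rest : Commute (g i * g j) ((t.filter (β · ≠ β i)).map g).prod :=
      Commute.list_prod_right _ _ fun x hx => by
        obtain ⟨l, hl, rfl⟩ := List.mem_map.mp hx
        have hl : β l ≠ β i := by simpa using (List.mem_filter.mp hl).2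
        exact (hcomm i l hl.symm).mul_left (hcomm j l (hj ▸ hl.symm))
    have hij : IsIdempotentElem (g i * g j) := by
      rw [IsIdempotentElem, mul_assoc, ← mul_assoc (g j), habsorb j i hj]
    rw [List.map_cons, List.prod_cons,
      List.prod_map_eq_prod_map_filter_mul_of_commute hcomm (β i), ← mul_assoc, hblock]
    exact hij.mul_of_commute hcomm_rest hrest
termination_by l => l.length
decreasing_by exact Nat.lt_succ_of_le (List.length_filter_le _ _)

theorem isIdempotentElem_of_mem_closure_range
    (hidem : ∀ i, IsIdempotentElem (g i))
    (hcomm : ∀ i j, β i ≠ β j → Commute (g i) (g j))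
    (habsorb : ∀ i j, β i = β j → g i * g j * g i = g i)
    (htwo : ∀ i j l, β i = β j → β j = β l → i = j ∨ j = l ∨ i = l)
    {x : M} (hx : x ∈ Submonoid.closure (Set.range g)) : IsIdempotentElem x := by
  rw [← FreeMonoid.mrange_lift] at hx
  obtain ⟨w, rfl⟩ := hx
  rw [FreeMonoid.lift_apply]
  exact isIdempotentElem_prod_map hidem hcomm habsorb htwo _

end BlockIdempotent

theorem Nat.exists_mem_Icc_of_step_le (f : ℕ → ℕ) (d : ℕ) {m T : ℕ}
    (hstep : ∀ t < T, f (t + 1) ≤ f t + (d + 1)) (h0 : f 0 ≤ m) (hT : m ≤ f T) :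
    ∃ s ≤ T, m ≤ f s ∧ f s ≤ m + d := by
  induction T with
  | zero => exact ⟨0, le_rfl, by omega, by omega⟩
  | succ T ih =>
    by_cases hm : m ≤ f T
    · obtain ⟨s, hs, hfs⟩ := ih (fun t ht => hstep t (by omega)) hm
      exact ⟨s, by omega, hfs⟩
    · exact ⟨T + 1, le_rfl, hT, by linarith [hstep T (by omega)]⟩

section Partition

variable {k : ℕ} (parts : Fin k → ℕ)

def prefixSum (t : ℕ) : ℕ :=
  ∑ j ∈ Finset.univ.filter (fun j : Fin k => (j : ℕ) < t), parts j

/-- `c` counts the strands to the left of the line. -/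
def IsDividingLine (c : ℕ) : Prop :=
  ∃ t : Fin k, 0 < (t : ℕ) ∧ c = prefixSum parts t

/-- Strands `i` and `j` (counted from `0`) lie in the same block iff
`blocksUpTo parts i = blocksUpTo parts j`. -/
def blocksUpTo (i : ℕ) : Set (Fin k) :=
  {t | prefixSum parts t ≤ i}

theorem prefixSum_zero : prefixSum parts 0 = 0 := by
  simp [prefixSum]

theorem prefixSum_of_le {t : ℕ} (ht : k ≤ t) : prefixSum parts t = ∑ j, parts j := by
  rw [prefixSum, Finset.filter_true_of_mem fun j _ => j.isLt.trans_le ht]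

theorem prefixSum_succ {t : ℕ} (ht : t < k) :
    prefixSum parts (t + 1) = prefixSum parts t + parts ⟨t, ht⟩ := by
  have hinsert : Finset.univ.filter (fun j : Fin k => (j : ℕ) < t + 1) =
      insert ⟨t, ht⟩ (Finset.univ.filter (fun j : Fin k => (j : ℕ) < t)) := by
    ext j
    simp only [Finset.mem_filter, Finset.mem_univ, true_and, Finset.mem_insert, Fin.ext_iff]
    omega
  rw [prefixSum, hinsert, Finset.sum_insert (by simp), add_comm, prefixSum]

theorem exists_isDividingLine_mem_Icc {n : ℕ} (hle : ∀ t, parts t ≤ 3)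
    (hsum : ∑ t, parts t = n) {c : ℕ} (hc : 0 < c) (hcn : c + 2 < n) :
    ∃ c' ∈ Set.Icc c (c + 2), IsDividingLine parts c' := by
  obtain ⟨s, -, hcs, hsc⟩ := Nat.exists_mem_Icc_of_step_le (prefixSum parts) 2 (m := c) (T := k)
    (fun t ht => by rw [prefixSum_succ parts ht]; linarith [hle ⟨t, ht⟩])
    (by simp [prefixSum_zero]) (by rw [prefixSum_of_le parts le_rfl]; omega)
  have hsk : s < k := by
    by_contra! h
    rw [prefixSum_of_le parts h] at hsc
    omega
  have hs0 : 0 < s := by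
    by_contra! h
    rw [Nat.le_zero.mp h, prefixSum_zero] at hcs
    omega
  exact ⟨_, ⟨hcs, hsc⟩, ⟨s, hsk⟩, hs0, rfl⟩

theorem blocksUpTo_succ {i : ℕ} (hi : ¬ IsDividingLine parts (i + 1)) :
    blocksUpTo parts (i + 1) = blocksUpTo parts i := by
  ext t
  change prefixSum parts t ≤ i + 1 ↔ prefixSum parts t ≤ i
  refine ⟨fun ht => Nat.le_of_lt_succ (lt_of_le_of_ne ht fun heq => ?_), fun ht => by omega⟩
  refine hi ⟨t, Nat.pos_of_ne_zero fun h0 => ?_, heq.symm⟩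
  rw [h0, prefixSum_zero] at heq
  omega

theorem blocksUpTo_ne_of_add_two_le {n : ℕ} (hle : ∀ t, parts t ≤ 3)
    (hsum : ∑ t, parts t = n) {i j : ℕ} (hj : ¬ IsDividingLine parts (j + 1))
    (hij : i + 2 ≤ j) (hjn : j + 2 ≤ n) : blocksUpTo parts i ≠ blocksUpTo parts j := by
  obtain ⟨c, ⟨hc₁, hc₂⟩, t, ht, rfl⟩ :=
    exists_isDividingLine_mem_Icc parts hle hsum (c := i + 1) (by omega) (by omega)
  -- The line in `[i + 1, i + 3]` must lie beyond `j`, as the blocks agree, so it is at `j + 1`.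
  intro heq
  rcases Nat.lt_or_ge j (prefixSum parts t) with hlt | hge
  · exact hj ⟨t, ht, by omega⟩
  · have hmem : t ∈ blocksUpTo parts j := hge
    rw [← heq] at hmem
    change prefixSum parts t ≤ i at hmem
    omega

end Partition

theorem jonesGen_isIdempotentElem (n : ℕ) (i : Fin (n - 1)) : IsIdempotentElem (jonesGen n i) :=
  (Con.eq _).mpr (ConGen.Rel.of _ _ (Or.inl ⟨i, rfl, rfl⟩))

theorem jonesGen_mul_mul_self_of_adjacent (n : ℕ) {i j : Fin (n - 1)}
    (h : (i : ℕ) + 1 = j ∨ (j : ℕ) + 1 = i) :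
    jonesGen n i * jonesGen n j * jonesGen n i = jonesGen n i :=
  (Con.eq _).mpr (ConGen.Rel.of _ _ (Or.inr (Or.inl ⟨i, j, h, rfl, rfl⟩)))

theorem jonesGen_commute_of_far (n : ℕ) {i j : Fin (n - 1)}
    (h : (i : ℕ) + 2 ≤ j ∨ (j : ℕ) + 2 ≤ i) : Commute (jonesGen n i) (jonesGen n j) :=
  (Con.eq _).mpr (ConGen.Rel.of _ _ (Or.inr (Or.inr ⟨i, j, h, rfl, rfl⟩)))

theorem jonesGen_commute_of_blocksUpTo_ne {n k : ℕ} {parts : Fin k → ℕ} {i j : Fin (n - 1)}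
    (hi : ¬ IsDividingLine parts (i + 1)) (hj : ¬ IsDividingLine parts (j + 1))
    (hij : blocksUpTo parts i ≠ blocksUpTo parts j) :
    Commute (jonesGen n i) (jonesGen n j) := by
  refine jonesGen_commute_of_far n ?_
  have : (i : ℕ) ≠ j := fun h => hij (by rw [h])
  have : (i : ℕ) + 1 ≠ j := fun h => hij (by rw [← h, blocksUpTo_succ parts hi])
  have : (j : ℕ) + 1 ≠ i := fun h => hij (by rw [← h, blocksUpTo_succ parts hj])
  omega

theorem adjacent_of_blocksUpTo_eq {n k : ℕ} {parts : Fin k → ℕ} (hle : ∀ t, parts t ≤ 3)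
    (hsum : ∑ t, parts t = n) {i j : Fin (n - 1)} (hi : ¬ IsDividingLine parts (i + 1))
    (hj : ¬ IsDividingLine parts (j + 1))
    (hij : blocksUpTo parts i = blocksUpTo parts j) :
    (i : ℕ) = j ∨ (i : ℕ) + 1 = j ∨ (j : ℕ) + 1 = i := by
  have := i.isLt
  have := j.isLt
  by_cases hfar : (i : ℕ) + 2 ≤ j
  · exact absurd hij (blocksUpTo_ne_of_add_two_le parts hle hsum hj hfar (by omega))
  by_cases hfar' : (j : ℕ) + 2 ≤ i
  · exact absurd hij.symm (blocksUpTo_ne_of_add_two_le parts hle hsum hi hfar' (by omega))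
  omega

theorem jones_partition_idempotent_submonoid_general (n k : ℕ) (parts : Fin k → ℕ)
    (hle : ∀ t, parts t ≤ 3)
    (hsum : ∑ t, parts t = n) :
    ∀ S : Submonoid (JonesMonoid n),
      S = Submonoid.closure
        { x | ∃ i : Fin (n - 1),
            (¬ ∃ t : Fin k, 0 < (t : ℕ) ∧
              (i : ℕ) + 1 = ∑ j ∈ Finset.univ.filter (fun j : Fin k => (j : ℕ) < t),
                parts j) ∧
            x = jonesGen n i } →
      (∀ a ∈ S, ∀ b ∈ S, a * b ∈ S) ∧ (∀ a ∈ S, a * a = a) := by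
  rintro S rfl
  refine ⟨fun a ha b hb => mul_mem ha hb, fun a ha => ?_⟩
  let I := {i : Fin (n - 1) // ¬ IsDividingLine parts (i + 1)}
  have hgens : {x | ∃ i : Fin (n - 1), ¬ IsDividingLine parts (i + 1) ∧ x = jonesGen n i} =
      Set.range fun i : I => jonesGen n i :=
    Set.ext fun _ => ⟨fun ⟨i, hi, hx⟩ => ⟨⟨i, hi⟩, hx.symm⟩,
      fun ⟨i, hx⟩ => ⟨i, i.2, hx.symm⟩⟩
  have hadj (i j : I) (h : blocksUpTo parts i.1 = blocksUpTo parts j.1) :=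
    adjacent_of_blocksUpTo_eq hle hsum i.2 j.2 h
  refine isIdempotentElem_of_mem_closure_range (β := fun i : I => blocksUpTo parts i.1)
    (fun i => jonesGen_isIdempotentElem n i)
    (fun i j h => jonesGen_commute_of_blocksUpTo_ne i.2 j.2 h)
    (fun i j h => ?_) (fun i j l hij hjl => ?_) (hgens ▸ ha)
  · rcases hadj i j h with h | h | h
    · rw [Fin.val_injective h, (jonesGen_isIdempotentElem n j).eq,
        (jonesGen_isIdempotentElem n j).eq]
    all_goals exact jonesGen_mul_mul_self_of_adjacent n (by omega)
  · have := hadj i j hij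
    have := hadj j l hjl
    have := hadj i l (hij.trans hjl)
    simp only [I, Subtype.ext_iff, Fin.ext_iff]
    omega

/-- Let `P = a_1 + ⋯ + a_k` be a partition of `n` with all parts `a_t ≤ 3`. The set of
elements of `J_n` admitting the partition `P` — i.e. the submonoid generated by the
hook generators not crossing any of the `k - 1` dividing lines (placed after
`a_1 + ⋯ + a_t` strands for `0 < t < k`) — is closed under composition, and all of
its elements are idempotent; hence it is an idempotent submonoid of `J_n`. -/
theorem jones_partition_idempotent_submonoid (n k : ℕ) (parts : Fin k → ℕ)
    (hle : ∀ t, parts t ≤ 3) (hpos : ∀ t, 1 ≤ parts t)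
    (hsum : ∑ t, parts t = n) :
    ∀ S : Submonoid (JonesMonoid n),
      S = Submonoid.closure
        { x | ∃ i : Fin (n - 1),
            (¬ ∃ t : Fin k, 0 < (t : ℕ) ∧
              (i : ℕ) + 1 = ∑ j ∈ Finset.univ.filter (fun j : Fin k => (j : ℕ) < t),
                parts j) ∧
            x = jonesGen n i } →
      (∀ a ∈ S, ∀ b ∈ S, a * b ∈ S) ∧ (∀ a ∈ S, a * a = a) :=
  jones_partition_idempotent_submonoid_general n k parts hle hsum
end
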